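/- Let 𝒢 and 𝒦 be groupoids with 𝒢₀ finite, X a finite split (𝒢_α,𝒦_β)-set via α=(X_g,α_g)_{g∈𝒢} and β=(Y_k,β_k)_{k∈𝒦}, and A a unital 𝒢-graded algebra. Then there exists an action γ=(E_k,γ_k)_{k∈𝒦} of 𝒦 on the algebra A #_α^𝒢 X such that each ideal E_k = ⊕_{g∈𝒢} ⊕_{x ∈ Y_k ∩ X_{d(g)}} A_g δ_x is unital (with identity 𝟏_k = Σ_{e∈𝒢₀} Σ_{x∈Y_k∩X_e} 1_e δ_x), γ_k(a_g δ_y) = a_g δ_{β_k(y)} for y ∈ Y_{k⁻¹} ∩ X_{d(g)}, and A #_α^𝒢 X = ⊕_{p∈𝒦₀} E_p. -/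

import Mathlib

open scoped Classical

noncomputable section

universe u v w

/-- A groupoid, presented as a set of morphisms with partially defined
composition.  `s g` is the domain (source) identity `d(g)`, `t g` the range
(target) identity `r(g)`; `mul g h` is the composite `gh`, meaningful when
`s g = t h`. -/
structure Gpd (G : Type u) where
  s : G → G
  t : G → G
  inv : G → G
  mul : G → G → G
  s_s : ∀ g, s (s g) = s g
  t_s : ∀ g, t (s g) = s g
  s_t : ∀ g, s (t g) = t g
  t_t : ∀ g, t (t g) = t g
  s_mul : ∀ g h, s g = t h → s (mul g h) = s h
  t_mul : ∀ g h, s g = t h → t (mul g h) = t g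
  mul_assoc : ∀ g h l, s g = t h → s h = t l → mul (mul g h) l = mul g (mul h l)
  mul_src : ∀ g, mul g (s g) = g
  tgt_mul : ∀ g, mul (t g) g = g
  s_inv : ∀ g, s (inv g) = t g
  t_inv : ∀ g, t (inv g) = s g
  inv_mul : ∀ g, mul (inv g) g = s g
  mul_inv : ∀ g, mul g (inv g) = t g

namespace Gpd

variable {G : Type u}

/-- `e` is an object (identity) of the groupoid. -/
def obj (𝒢 : Gpd G) (e : G) : Prop := 𝒢.s e = e

/-- The set `𝒢₀` of objects of the groupoid. -/
def Objs (𝒢 : Gpd G) : Set G := {e | 𝒢.obj e}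

end Gpd

/-- An action `α = (X_g, α_g)` of a groupoid `𝒢` on a set `X`:
`car g` is the subset `X_g` and `act g` restricts to the bijection
`α_g : X_{g⁻¹} → X_g`. -/
structure GpdSetAction {G : Type u} (𝒢 : Gpd G) (X : Type v) where
  car : G → Set X
  act : G → X → X
  car_t : ∀ g, car g = car (𝒢.t g)
  bijOn : ∀ g, Set.BijOn (act g) (car (𝒢.inv g)) (car g)
  act_id : ∀ e, 𝒢.obj e → ∀ x ∈ car e, act e x = x
  act_mul : ∀ g h, 𝒢.s g = 𝒢.t h → ∀ x ∈ car (𝒢.inv h),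
    act g (act h x) = act (𝒢.mul g h) x

/-- `X` is a split `𝒢`-set: `X` is the disjoint union of the `X_e`, `e ∈ 𝒢₀`. -/
def GpdSetAction.Split {G : Type u} {𝒢 : Gpd G} {X : Type v} (α : GpdSetAction 𝒢 X) : Prop :=
  ∀ x : X, ∃! e : G, 𝒢.obj e ∧ x ∈ α.car e

/-- The action is fully faithful: if `α_g` fixes some `x ∈ X_g ∩ X_{g⁻¹}`
then `g` is an identity. -/
def GpdSetAction.FullyFaithful {G : Type u} {𝒢 : Gpd G} {X : Type v}
    (α : GpdSetAction 𝒢 X) : Prop :=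
  ∀ g x, x ∈ α.car g ∩ α.car (𝒢.inv g) → α.act g x = x → 𝒢.obj g

/-- A `𝒢`-grading of the `k`-algebra `A`:  `A = ⊕_{g ∈ 𝒢} A_g` with
`A_g A_h ⊆ A_{gh}` for composable `g, h` and `A_g A_h = 0` otherwise. -/
structure GpdGrading {G : Type u} (𝒢 : Gpd G) (k : Type v) (A : Type w)
    [Field k] [Ring A] [Algebra k A] where
  comp : G → Submodule k A
  internal : DirectSum.IsInternal comp
  mul_mem : ∀ g h, 𝒢.s g = 𝒢.t h → ∀ a ∈ comp g, ∀ b ∈ comp h, a * b ∈ comp (𝒢.mul g h)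
  mul_eq_zero : ∀ g h, 𝒢.s g ≠ 𝒢.t h → ∀ a ∈ comp g, ∀ b ∈ comp h, a * b = 0

/-- The homogeneous component of degree `g` of `a ∈ A`. -/
noncomputable def GpdGrading.proj {G : Type u} {𝒢 : Gpd G} {k : Type v} {A : Type w}
    [Field k] [Ring A] [Algebra k A] (𝒜 : GpdGrading 𝒢 k A) (g : G) (a : A) : A :=
  ((Equiv.ofBijective _ 𝒜.internal).symm a g : A)

/-- `one : G → A` is a family of local units for the grading: each `one e`
(`e ∈ 𝒢₀`) is an identity element of `A_e` and `1_A = Σ_{e ∈ 𝒢₀} 1_e`. -/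
def IsIdFamily {G : Type u} {𝒢 : Gpd G} {k : Type v} {A : Type w}
    [Field k] [Ring A] [Algebra k A] (𝒜 : GpdGrading 𝒢 k A) (one : G → A) : Prop :=
  (∀ e, 𝒢.obj e → one e ∈ 𝒜.comp e ∧ ∀ a ∈ 𝒜.comp e, one e * a = a ∧ a * one e = a) ∧
  (1 : A) = ∑ᶠ e ∈ 𝒢.Objs, one e

/-- The multiplication of the smash product `A #_α^𝒢 X`, defined on the
ambient space of formal sums `Σ a_{(g,x)} δ_{(g,x)}`:
`(a δ_{(g,x)}) (b δ_{(h,y)}) = (a b) δ_{(gh, y)}` when `d(g) = r(h)` and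
`α_h(y) = x`, and `0` otherwise. -/
noncomputable def smashMul {G : Type u} {𝒢 : Gpd G} {X : Type v} {A : Type w} [Ring A]
    (α : GpdSetAction 𝒢 X) (f₁ f₂ : (G × X) →₀ A) : (G × X) →₀ A :=
  f₁.sum fun p a => f₂.sum fun q b =>
    if 𝒢.s p.1 = 𝒢.t q.1 ∧ α.act q.1 q.2 = p.2
    then Finsupp.single (𝒢.mul p.1 q.1, q.2) (a * b) else 0

/-- The underlying set of the smash product `A #_α^𝒢 X = ⊕_{g} ⊕_{x ∈ X_{d(g)}} A_g δ_x`: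
those formal sums whose `(g,x)`-coefficient lies in `A_g`, supported on pairs
with `x ∈ X_{d(g)}`. -/
def smashSet {G : Type u} {𝒢 : Gpd G} {X : Type v} {k : Type*} {A : Type w}
    [Field k] [Ring A] [Algebra k A]
    (α : GpdSetAction 𝒢 X) (𝒜 : GpdGrading 𝒢 k A) : Set ((G × X) →₀ A) :=
  {f | ∀ p : G × X, f p ∈ 𝒜.comp p.1 ∧ (f p ≠ 0 → p.2 ∈ α.car (𝒢.s p.1))}

/-- The identity element `Σ_{e ∈ 𝒢₀} Σ_{x ∈ X_e} 1_e δ_x` of the smash product. -/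
noncomputable def smashOne {G : Type u} {𝒢 : Gpd G} {X : Type v} {A : Type w} [Ring A]
    (α : GpdSetAction 𝒢 X) (one : G → A) : (G × X) →₀ A :=
  ∑ᶠ e ∈ 𝒢.Objs, ∑ᶠ x ∈ α.car e, Finsupp.single ((e, x) : G × X) (one e)

/-- `X` is a `(𝒢_α, 𝒦_β)`-set:  each `Y_k` is `α`-invariant, each `X_g` is
`β`-invariant, and the two actions commute. -/
structure GKCompat {G : Type u} {K : Type*} {𝒢 : Gpd G} {𝒦 : Gpd K} {X : Type v}
    (α : GpdSetAction 𝒢 X) (β : GpdSetAction 𝒦 X) : Prop where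
  alpha_inv : ∀ g κ, α.act g '' (α.car (𝒢.inv g) ∩ β.car κ) ⊆ α.car g ∩ β.car κ
  beta_inv : ∀ g κ, β.act κ '' (α.car g ∩ β.car (𝒦.inv κ)) ⊆ α.car g ∩ β.car κ
  comm : ∀ g κ x, x ∈ α.car (𝒢.inv g) ∩ β.car (𝒦.inv κ) →
    α.act g (β.act κ x) = β.act κ (α.act g x)

/-- The ideal `E_k = A #^𝒢_{θ^k} Y_k = ⊕_g ⊕_{x ∈ Y_k ∩ X_{d(g)}} A_g δ_x`
of the smash product `A #_α^𝒢 X`. -/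
def Eset {G : Type u} {K : Type*} {𝒢 : Gpd G} {𝒦 : Gpd K} {X : Type v}
    {k : Type*} {A : Type w} [Field k] [Ring A] [Algebra k A]
    (α : GpdSetAction 𝒢 X) (β : GpdSetAction 𝒦 X) (𝒜 : GpdGrading 𝒢 k A)
    (κ : K) : Set ((G × X) →₀ A) :=
  {f | f ∈ smashSet α 𝒜 ∧ ∀ p : G × X, f p ≠ 0 → p.2 ∈ β.car κ}

/-- The map `γ_k : E_{k⁻¹} → E_k`, `γ_k(a_g δ_y) = a_g δ_{β_k(y)}`. -/
noncomputable def gammaAct {G : Type u} {K : Type*} {𝒦 : Gpd K} {X : Type v} {A : Type w}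
    [Ring A] (β : GpdSetAction 𝒦 X) (κ : K) (f : (G × X) →₀ A) : (G × X) →₀ A :=
  f.sum fun p a =>
    if p.2 ∈ β.car (𝒦.inv κ) then Finsupp.single ((p.1, β.act κ p.2) : G × X) a else 0

/-- The identity element `𝟏_k = Σ_{e ∈ 𝒢₀} Σ_{x ∈ Y_k ∩ X_e} 1_e δ_x` of `E_k`. -/
noncomputable def OneE {G : Type u} {K : Type*} {𝒢 : Gpd G} {𝒦 : Gpd K} {X : Type v}
    {A : Type w} [Ring A]
    (α : GpdSetAction 𝒢 X) (β : GpdSetAction 𝒦 X) (one : G → A) (κ : K) : (G × X) →₀ A :=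
  ∑ᶠ e ∈ 𝒢.Objs, ∑ᶠ x ∈ (β.car κ ∩ α.car e), Finsupp.single ((e, x) : G × X) (one e)

/-! `E_k` consists of the formal sums whose points lie in `Y_k`. A product `(a δ_x)(b δ_y)` is
supported at `y` and vanishes unless `x = α_h(y)`; since the `𝒢`-action preserves every `Y_k`, it
lies in `E_k` as soon as one factor does. The local units `1_e` of the grading make `𝟏_k` a
two-sided identity of `E_k`. On `E_{k⁻¹}`, `γ_k` is `Finsupp.mapDomain` along `β_k`, so the
groupoid laws of `γ` are those of `β`; it is multiplicative because `β_k` commutes with every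
`α_h` and is injective. Finally, splitness of `β` attaches to each point `x` the unique object `p`
with `x ∈ Y_p`, and `A #_α^𝒢 X = ⊕_{p ∈ 𝒦₀} E_p` is the partition of a formal sum into these
fibres. -/

namespace Finsupp

variable {ι J M : Type*} [AddCommMonoid M]

lemma finsum_apply_of_apply_ne_zero {c : J → ι →₀ M} (hc : (Function.support c).Finite)
    {σ : ι → J} (hσ : ∀ j i, c j i ≠ 0 → j = σ i) (i : ι) :
    (∑ᶠ j, c j) i = c (σ i) i := by
  rw [← applyAddHom_apply, map_finsum _ hc]
  exact finsum_eq_single _ _ fun j hj => by_contra fun h => hj (hσ j i h)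

lemma eq_filter_finsum {c : J → ι →₀ M} (hc : (Function.support c).Finite)
    {σ : ι → J} (hσ : ∀ j i, c j i ≠ 0 → j = σ i) (j : J) :
    c j = (∑ᶠ j', c j').filter fun i => σ i = j := by
  ext i
  rw [filter_apply, finsum_apply_of_apply_ne_zero hc hσ]
  split_ifs with hi
  · rw [hi]
  · exact by_contra fun h => hi (hσ j i h).symm

lemma filter_apply_ne_zero {P : ι → Prop} {f : ι →₀ M} {i : ι} (hi : f.filter P i ≠ 0) :
    P i ∧ f i ≠ 0 := by
  rw [← mem_support_iff, support_filter, Finset.mem_filter, mem_support_iff] at hi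
  exact hi.symm

lemma finite_support_filter_fiber (f : ι →₀ M) (σ : ι → J) :
    (Function.support fun j => f.filter fun i => σ i = j).Finite := by
  refine (f.support.image σ).finite_toSet.subset fun j hj => ?_
  obtain ⟨i, hi⟩ := Finsupp.ne_iff.1 hj
  obtain ⟨rfl, hfi⟩ := filter_apply_ne_zero hi
  exact Finset.mem_image_of_mem σ (mem_support_iff.2 hfi)

lemma finsum_filter_fiber (f : ι →₀ M) (σ : ι → J) :
    ∑ᶠ j, f.filter (fun i => σ i = j) = f := by
  ext i
  rw [finsum_apply_of_apply_ne_zero (finite_support_filter_fiber f σ)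
    (fun j i hi => (filter_apply_ne_zero hi).1.symm), filter_apply, if_pos rfl]

end Finsupp

section Graded

variable {ι R M : Type*} [Semiring R] [AddCommMonoid M] [Module R M]

def homogeneousSupported (N : ι → Submodule R M) (P : ι → Prop) : Submodule R (ι →₀ M) where
  carrier := {f | ∀ i, f i ∈ N i ∧ (f i ≠ 0 → P i)}
  add_mem' {f g} hf hg i := by
    refine ⟨add_mem (hf i).1 (hg i).1, fun hfg => ?_⟩
    by_cases hfi : f i = 0
    · exact (hg i).2 fun hgi => hfg (by simp [hfi, hgi])
    · exact (hf i).2 hfi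
  zero_mem' i := ⟨zero_mem _, fun h => absurd rfl h⟩
  smul_mem' c f hf i :=
    ⟨Submodule.smul_mem _ c (hf i).1, fun h => (hf i).2 fun hfi => h (by simp [hfi])⟩

lemma single_mem_homogeneousSupported {N : ι → Submodule R M} {P : ι → Prop} {i : ι} {a : M}
    (ha : a ∈ N i) (hP : a ≠ 0 → P i) : Finsupp.single i a ∈ homogeneousSupported N P := by
  intro j
  rw [Finsupp.single_apply]
  split_ifs with h
  · exact ⟨h ▸ ha, h ▸ hP⟩
  · exact ⟨zero_mem _, fun h => absurd rfl h⟩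

end Graded

lemma Gpd.t_eq_of_obj {G : Type u} {𝒢 : Gpd G} {e : G} (he : 𝒢.obj e) : 𝒢.t e = e := by
  rw [← he, 𝒢.t_s]

namespace GpdSetAction

variable {G : Type u} {X : Type v} {𝒢 : Gpd G} (α : GpdSetAction 𝒢 X)

lemma car_inv (g : G) : α.car (𝒢.inv g) = α.car (𝒢.s g) := by
  rw [α.car_t, 𝒢.t_inv]

lemma car_inv_inv (g : G) : α.car (𝒢.inv (𝒢.inv g)) = α.car g := by
  rw [car_inv, 𝒢.s_inv, ← α.car_t]

lemma act_mem {g : G} {x : X} (hx : x ∈ α.car (𝒢.s g)) : α.act g x ∈ α.car g :=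
  (α.bijOn g).mapsTo (by rwa [car_inv])

lemma act_inv_act {g : G} {x : X} (hx : x ∈ α.car (𝒢.s g)) :
    α.act (𝒢.inv g) (α.act g x) = x := by
  rw [α.act_mul _ _ (𝒢.s_inv g) x (by rwa [car_inv]), 𝒢.inv_mul]
  exact α.act_id _ (𝒢.s_s g) x hx

end GpdSetAction

namespace GKCompat

variable {G : Type u} {K : Type*} {X : Type v} {𝒢 : Gpd G} {𝒦 : Gpd K}
  {α : GpdSetAction 𝒢 X} {β : GpdSetAction 𝒦 X}

lemma act_mem_car (hc : GKCompat α β) {g : G} {κ : K} {x : X}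
    (hx : x ∈ α.car (𝒢.s g)) (hκ : x ∈ β.car κ) : α.act g x ∈ β.car κ :=
  (hc.alpha_inv g κ ⟨x, ⟨by rwa [α.car_inv], hκ⟩, rfl⟩).2

lemma mem_car_of_act_mem (hc : GKCompat α β) {g : G} {κ : K} {x : X}
    (hx : x ∈ α.car (𝒢.s g)) (hκ : α.act g x ∈ β.car κ) : x ∈ β.car κ := by
  have hgx : α.act g x ∈ α.car (𝒢.s (𝒢.inv g)) := by
    rw [𝒢.s_inv, ← α.car_t]
    exact α.act_mem hx
  simpa only [α.act_inv_act hx] using hc.act_mem_car hgx hκ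

lemma act_act_eq_act_iff (hc : GKCompat α β) {g : G} {κ : K} {x y : X}
    (hx : x ∈ β.car (𝒦.inv κ)) (hy : y ∈ β.car (𝒦.inv κ)) (hyα : y ∈ α.car (𝒢.s g)) :
    α.act g (β.act κ y) = β.act κ x ↔ α.act g y = x := by
  rw [hc.comm g κ y ⟨by rwa [α.car_inv], hy⟩]
  exact (β.bijOn κ).injOn.eq_iff (hc.act_mem_car hyα hy) hx

end GKCompat

section SmashProduct

variable {G : Type u} {X : Type v} {A : Type w} [Ring A] {𝒢 : Gpd G} (α : GpdSetAction 𝒢 X)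

lemma smashMul_single_left (u : G × X) (a : A) (f : (G × X) →₀ A) :
    smashMul α (Finsupp.single u a) f
      = f.sum fun q b => if 𝒢.s u.1 = 𝒢.t q.1 ∧ α.act q.1 q.2 = u.2
          then Finsupp.single (𝒢.mul u.1 q.1, q.2) (a * b) else 0 :=
  Finsupp.sum_single_index (by simp)

lemma smashMul_single_right (f : (G × X) →₀ A) (v : G × X) (b : A) :
    smashMul α f (Finsupp.single v b)
      = f.sum fun p a => if 𝒢.s p.1 = 𝒢.t v.1 ∧ α.act v.1 v.2 = p.2
          then Finsupp.single (𝒢.mul p.1 v.1, v.2) (a * b) else 0 :=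
  Finsupp.sum_congr fun _ _ => Finsupp.sum_single_index (by simp)

lemma smashMul_single_single (u v : G × X) (a b : A) :
    smashMul α (Finsupp.single u a) (Finsupp.single v b)
      = if 𝒢.s u.1 = 𝒢.t v.1 ∧ α.act v.1 v.2 = u.2
          then Finsupp.single (𝒢.mul u.1 v.1, v.2) (a * b) else 0 := by
  rw [smashMul_single_left]
  exact Finsupp.sum_single_index (by simp)

lemma smashMul_add_left (f₁ f₂ g : (G × X) →₀ A) :
    smashMul α (f₁ + f₂) g = smashMul α f₁ g + smashMul α f₂ g := by
  refine Finsupp.sum_add_index' (fun _ => by simp) fun p a₁ a₂ => ?_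
  rw [← Finsupp.sum_add]
  refine Finsupp.sum_congr fun q _ => ?_
  split_ifs <;> simp [add_mul]

lemma smashMul_add_right (f g₁ g₂ : (G × X) →₀ A) :
    smashMul α f (g₁ + g₂) = smashMul α f g₁ + smashMul α f g₂ := by
  rw [smashMul, smashMul, smashMul, ← Finsupp.sum_add]
  refine Finsupp.sum_congr fun p _ => Finsupp.sum_add_index' (fun _ => by simp) fun q b₁ b₂ => ?_
  split_ifs <;> simp [mul_add]

def smashMulHom : ((G × X) →₀ A) →+ ((G × X) →₀ A) →+ ((G × X) →₀ A) :=
  AddMonoidHom.mk' (fun f => AddMonoidHom.mk' (smashMul α f) (smashMul_add_right α f))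
    fun f₁ f₂ => AddMonoidHom.ext (smashMul_add_left α f₁ f₂)

lemma smashMul_finsuppSum_left {ι M : Type*} [Zero M] (f : ι →₀ M)
    (F : ι → M → (G × X) →₀ A) (g : (G × X) →₀ A) :
    smashMul α (f.sum F) g = f.sum fun i m => smashMul α (F i m) g := by
  change smashMulHom α (f.sum F) g = _
  rw [map_finsuppSum, AddMonoidHom.finsuppSum_apply]
  rfl

lemma smashMul_finsuppSum_right {ι M : Type*} [Zero M] (f : (G × X) →₀ A) (g : ι →₀ M)
    (H : ι → M → (G × X) →₀ A) :
    smashMul α f (g.sum H) = g.sum fun i m => smashMul α f (H i m) :=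
  map_finsuppSum (smashMulHom α f) g H

lemma smashMul_eq_sum_single (f g : (G × X) →₀ A) :
    smashMul α f g = f.sum fun p a => g.sum fun q b =>
      smashMul α (Finsupp.single p a) (Finsupp.single q b) := by
  conv_lhs => rw [← f.sum_single, ← g.sum_single]
  rw [smashMul_finsuppSum_left]
  simp only [smashMul_finsuppSum_right]

end SmashProduct

section Ideal

variable {G : Type u} {K : Type*} {X : Type v} {k : Type*} {A : Type w}
  [Field k] [Ring A] [Algebra k A] {𝒢 : Gpd G} {𝒦 : Gpd K}
  {α : GpdSetAction 𝒢 X} {β : GpdSetAction 𝒦 X} {𝒜 : GpdGrading 𝒢 k A} {κ : K}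

lemma Eset_eq_homogeneousSupported :
    Eset α β 𝒜 κ = homogeneousSupported (fun p : G × X => 𝒜.comp p.1)
      (fun p => p.2 ∈ α.car (𝒢.s p.1) ∧ p.2 ∈ β.car κ) := by
  ext f
  exact ⟨fun ⟨hf, hκ⟩ p => ⟨(hf p).1, fun h => ⟨(hf p).2 h, hκ p h⟩⟩,
    fun hf => ⟨fun p => ⟨(hf p).1, fun h => ((hf p).2 h).1⟩, fun p h => ((hf p).2 h).2⟩⟩

lemma Eset_eq_of_car_eq {κ' : K} (h : β.car κ = β.car κ') : Eset α β 𝒜 κ = Eset α β 𝒜 κ' := by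
  rw [Eset, Eset, h]

lemma smashMul_mem_Eset {f h : (G × X) →₀ A}
    (hfh : ∀ p q, f p ≠ 0 → h q ≠ 0 →
      smashMul α (Finsupp.single p (f p)) (Finsupp.single q (h q)) ∈ Eset α β 𝒜 κ) :
    smashMul α f h ∈ Eset α β 𝒜 κ := by
  simp only [Eset_eq_homogeneousSupported, SetLike.mem_coe] at hfh ⊢
  rw [smashMul_eq_sum_single]
  exact Submodule.finsuppSum_mem _ _ _ _ fun p hp =>
    Submodule.finsuppSum_mem _ _ _ _ fun q hq => hfh p q hp hq

lemma smashMul_single_single_mem_Eset {p q : G × X} {a b : A}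
    (ha : a ∈ 𝒜.comp p.1) (hb : b ∈ 𝒜.comp q.1) (hqα : q.2 ∈ α.car (𝒢.s q.1))
    (hqκ : α.act q.1 q.2 = p.2 → q.2 ∈ β.car κ) :
    smashMul α (Finsupp.single p a) (Finsupp.single q b) ∈ Eset α β 𝒜 κ := by
  rw [smashMul_single_single, Eset_eq_homogeneousSupported]
  split_ifs with hpq
  · exact single_mem_homogeneousSupported (𝒜.mul_mem _ _ hpq.1 a ha b hb)
      fun _ => ⟨by rwa [𝒢.s_mul _ _ hpq.1], hqκ hpq.2⟩
  · exact zero_mem _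

lemma smashMul_mem_Eset_of_left_mem (hc : GKCompat α β) {f h : (G × X) →₀ A}
    (hf : f ∈ Eset α β 𝒜 κ) (hh : h ∈ smashSet α 𝒜) : smashMul α f h ∈ Eset α β 𝒜 κ :=
  smashMul_mem_Eset fun p q hp hq =>
    smashMul_single_single_mem_Eset (hf.1 p).1 (hh q).1 ((hh q).2 hq)
      fun hqp => hc.mem_car_of_act_mem ((hh q).2 hq) (hqp ▸ hf.2 p hp)

lemma smashMul_mem_Eset_of_right_mem {f h : (G × X) →₀ A}
    (hf : f ∈ smashSet α 𝒜) (hh : h ∈ Eset α β 𝒜 κ) : smashMul α f h ∈ Eset α β 𝒜 κ :=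
  smashMul_mem_Eset fun p q _ hq =>
    smashMul_single_single_mem_Eset (hf p).1 (hh.1 q).1 ((hh.1 q).2 hq) fun _ => hh.2 q hq

end Ideal

section Unit

variable {G : Type u} {K : Type*} {X : Type v} {k : Type*} {A : Type w}
  [Field k] [Ring A] [Algebra k A] {𝒢 : Gpd G} {𝒦 : Gpd K}
  {𝒜 : GpdGrading 𝒢 k A} {one : G → A}

lemma IsIdFamily.one_eq_sum (hG₀ : 𝒢.Objs.Finite) (hone : IsIdFamily 𝒜 one) :
    (1 : A) = ∑ e ∈ hG₀.toFinset, one e := by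
  rw [hone.2, finsum_mem_eq_finite_toFinset_sum _ hG₀]

lemma IsIdFamily.one_t_mul (hG₀ : 𝒢.Objs.Finite) (hone : IsIdFamily 𝒜 one) {g : G} {b : A}
    (hb : b ∈ 𝒜.comp g) : one (𝒢.t g) * b = b := by
  have hother : ∀ e ∈ hG₀.toFinset, e ≠ 𝒢.t g → one e * b = 0 := fun e he hne => by
    have he : 𝒢.obj e := hG₀.mem_toFinset.1 he
    exact 𝒜.mul_eq_zero e g (by rwa [he]) _ (hone.1 e he).1 b hb
  rw [← Finset.sum_eq_single_of_mem _ (hG₀.mem_toFinset.2 (𝒢.s_t g)) hother, ← Finset.sum_mul,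
    ← hone.one_eq_sum hG₀, one_mul]

lemma IsIdFamily.mul_one_s (hG₀ : 𝒢.Objs.Finite) (hone : IsIdFamily 𝒜 one) {g : G} {a : A}
    (ha : a ∈ 𝒜.comp g) : a * one (𝒢.s g) = a := by
  have hother : ∀ e ∈ hG₀.toFinset, e ≠ 𝒢.s g → a * one e = 0 := fun e he hne => by
    have he : 𝒢.obj e := hG₀.mem_toFinset.1 he
    exact 𝒜.mul_eq_zero g e (by rwa [Gpd.t_eq_of_obj he, ne_comm]) a ha _ (hone.1 e he).1
  rw [← Finset.sum_eq_single_of_mem _ (hG₀.mem_toFinset.2 (𝒢.s_s g)) hother, ← Finset.mul_sum,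
    ← hone.one_eq_sum hG₀, mul_one]

variable [Finite X] {α : GpdSetAction 𝒢 X} {β : GpdSetAction 𝒦 X} {κ : K}

lemma OneE_apply (hG₀ : 𝒢.Objs.Finite) (p : G × X) :
    OneE α β one κ p = if 𝒢.obj p.1 ∧ p.2 ∈ β.car κ ∩ α.car p.1 then one p.1 else 0 := by
  rw [OneE, finsum_mem_eq_finite_toFinset_sum _ hG₀, Finsupp.finsetSum_apply]
  simp_rw [finsum_mem_eq_finite_toFinset_sum _ (Set.toFinite _), Finsupp.finsetSum_apply,
    Finsupp.single_apply]
  simp [Prod.ext_iff, ite_and, Gpd.Objs]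

lemma OneE_mem_Eset (hG₀ : 𝒢.Objs.Finite) (hone : IsIdFamily 𝒜 one) :
    OneE α β one κ ∈ Eset α β 𝒜 κ := by
  rw [Eset_eq_homogeneousSupported]
  intro p
  rw [OneE_apply hG₀]
  split_ifs with hp
  · exact ⟨(hone.1 _ hp.1).1, fun _ => ⟨by rw [hp.1]; exact hp.2.2, hp.2.1⟩⟩
  · exact ⟨zero_mem _, fun h => absurd rfl h⟩

lemma smashMul_OneE_single (hG₀ : 𝒢.Objs.Finite) (hone : IsIdFamily 𝒜 one) (hc : GKCompat α β)
    {q : G × X} {b : A} (hb : b ∈ 𝒜.comp q.1)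
    (hqα : q.2 ∈ α.car (𝒢.s q.1)) (hqκ : q.2 ∈ β.car κ) :
    smashMul α (OneE α β one κ) (Finsupp.single q b) = Finsupp.single q b := by
  have hact : α.act q.1 q.2 ∈ α.car (𝒢.t q.1) := by rw [← α.car_t]; exact α.act_mem hqα
  rw [smashMul_single_right, Finsupp.sum_eq_single (𝒢.t q.1, α.act q.1 q.2)]
  · have hunit : OneE α β one κ (𝒢.t q.1, α.act q.1 q.2) = one (𝒢.t q.1) := by
      rw [OneE_apply hG₀, if_pos ⟨𝒢.s_t q.1, hc.act_mem_car hqα hqκ, hact⟩]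
    rw [hunit, if_pos ⟨𝒢.s_t q.1, rfl⟩, 𝒢.tgt_mul, hone.one_t_mul hG₀ hb]
  · intro p hp hne
    rw [OneE_apply hG₀] at hp
    have hp₁ : 𝒢.obj p.1 := (ite_ne_right_iff.1 hp).1.1
    refine if_neg fun ⟨hst, hpx⟩ => hne (Prod.ext ?_ hpx.symm)
    rw [← hst, hp₁]
  · simp

lemma smashMul_single_OneE (hG₀ : 𝒢.Objs.Finite) (hone : IsIdFamily 𝒜 one) {p : G × X} {a : A}
    (ha : a ∈ 𝒜.comp p.1) (hpα : p.2 ∈ α.car (𝒢.s p.1)) (hpκ : p.2 ∈ β.car κ) :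
    smashMul α (Finsupp.single p a) (OneE α β one κ) = Finsupp.single p a := by
  rw [smashMul_single_left, Finsupp.sum_eq_single (𝒢.s p.1, p.2)]
  · have hunit : OneE α β one κ (𝒢.s p.1, p.2) = one (𝒢.s p.1) := by
      rw [OneE_apply hG₀, if_pos ⟨𝒢.s_s p.1, hpκ, hpα⟩]
    rw [hunit, if_pos ⟨(𝒢.t_s p.1).symm, α.act_id _ (𝒢.s_s p.1) _ hpα⟩, 𝒢.mul_src,
      hone.mul_one_s hG₀ ha]
  · intro q hq hne
    rw [OneE_apply hG₀] at hq
    obtain ⟨hq₁, -, hqα⟩ := (ite_ne_right_iff.1 hq).1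
    refine if_neg fun ⟨hst, hqp⟩ => hne (Prod.ext ?_ ?_)
    · rw [hst, Gpd.t_eq_of_obj hq₁]
    · rw [← hqp, α.act_id _ hq₁ _ hqα]
  · simp

lemma smashMul_OneE_left (hG₀ : 𝒢.Objs.Finite) (hone : IsIdFamily 𝒜 one) (hc : GKCompat α β)
    {f : (G × X) →₀ A} (hf : f ∈ Eset α β 𝒜 κ) : smashMul α (OneE α β one κ) f = f := by
  conv_lhs => rw [← f.sum_single]
  rw [smashMul_finsuppSum_right]
  conv_rhs => rw [← f.sum_single]
  exact Finsupp.sum_congr fun q hq =>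
    smashMul_OneE_single hG₀ hone hc (hf.1 q).1 ((hf.1 q).2 (Finsupp.mem_support_iff.1 hq))
      (hf.2 q (Finsupp.mem_support_iff.1 hq))

lemma smashMul_OneE_right (hG₀ : 𝒢.Objs.Finite) (hone : IsIdFamily 𝒜 one)
    {f : (G × X) →₀ A} (hf : f ∈ Eset α β 𝒜 κ) : smashMul α f (OneE α β one κ) = f := by
  conv_lhs => rw [← f.sum_single]
  rw [smashMul_finsuppSum_left]
  conv_rhs => rw [← f.sum_single]
  exact Finsupp.sum_congr fun p hp =>
    smashMul_single_OneE hG₀ hone (hf.1 p).1 ((hf.1 p).2 (Finsupp.mem_support_iff.1 hp))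
      (hf.2 p (Finsupp.mem_support_iff.1 hp))

end Unit

section Gamma

variable {G : Type u} {K : Type*} {X : Type v} {A : Type w} [Ring A] {𝒦 : Gpd K}
  (β : GpdSetAction 𝒦 X)

lemma gammaAct_single (κ : K) (u : G × X) (a : A) :
    gammaAct β κ (Finsupp.single u a)
      = if u.2 ∈ β.car (𝒦.inv κ) then Finsupp.single (u.1, β.act κ u.2) a else 0 :=
  Finsupp.sum_single_index (by simp)

lemma gammaAct_add (κ : K) (f g : (G × X) →₀ A) :
    gammaAct β κ (f + g) = gammaAct β κ f + gammaAct β κ g :=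
  Finsupp.sum_add_index' (fun _ => by simp) fun _ _ _ => by split_ifs <;> simp

lemma gammaAct_smul {R : Type*} [Monoid R] [DistribMulAction R A] (κ : K) (c : R)
    (f : (G × X) →₀ A) : gammaAct β κ (c • f) = c • gammaAct β κ f := by
  rw [gammaAct, Finsupp.sum_smul_index' (fun _ => by simp), gammaAct, Finsupp.smul_sum]
  exact Finsupp.sum_congr fun _ _ => by split_ifs <;> simp

lemma gammaAct_finsuppSum {ι M : Type*} [Zero M] (κ : K) (f : ι →₀ M)
    (F : ι → M → (G × X) →₀ A) :
    gammaAct β κ (f.sum F) = f.sum fun i m => gammaAct β κ (F i m) :=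
  map_finsuppSum (AddMonoidHom.mk' (gammaAct β κ) (gammaAct_add β κ) :
    ((G × X) →₀ A) →+ ((G × X) →₀ A)) f F

variable {β}

lemma gammaAct_eq_mapDomain {κ : K} {f : (G × X) →₀ A}
    (hf : ∀ p, f p ≠ 0 → p.2 ∈ β.car (𝒦.inv κ)) :
    gammaAct β κ f = f.mapDomain fun p => (p.1, β.act κ p.2) :=
  Finsupp.sum_congr fun p hp => if_pos (hf p (Finsupp.mem_support_iff.1 hp))

lemma gammaAct_gammaAct {κ l : K} (hκl : 𝒦.s κ = 𝒦.t l) {f : (G × X) →₀ A}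
    (hf : ∀ p, f p ≠ 0 → p.2 ∈ β.car (𝒦.inv l)) :
    gammaAct β κ (gammaAct β l f) = gammaAct β (𝒦.mul κ l) f := by
  have hγf : ∀ p, f.mapDomain (fun p => (p.1, β.act l p.2)) p ≠ 0 →
      p.2 ∈ β.car (𝒦.inv κ) := by
    intro p hp
    obtain ⟨q, hq, rfl⟩ := Finset.mem_image.1
      (Finsupp.mapDomain_support (Finsupp.mem_support_iff.2 hp))
    rw [β.car_inv, hκl, ← β.car_t]
    exact (β.bijOn l).mapsTo (hf q (Finsupp.mem_support_iff.1 hq))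
  have hf' : ∀ p, f p ≠ 0 → p.2 ∈ β.car (𝒦.inv (𝒦.mul κ l)) := by
    rw [β.car_inv, 𝒦.s_mul _ _ hκl, ← β.car_inv]
    exact hf
  rw [gammaAct_eq_mapDomain hf, gammaAct_eq_mapDomain hγf, gammaAct_eq_mapDomain hf',
    ← Finsupp.mapDomain_comp]
  exact Finsupp.mapDomain_congr fun p hp =>
    Prod.ext rfl (β.act_mul _ _ hκl _ (hf p (Finsupp.mem_support_iff.1 hp)))

lemma gammaAct_of_obj {p : K} (hp : 𝒦.obj p) {f : (G × X) →₀ A}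
    (hf : ∀ q, f q ≠ 0 → q.2 ∈ β.car p) : gammaAct β p f = f := by
  have hf' : ∀ q, f q ≠ 0 → q.2 ∈ β.car (𝒦.inv p) := by
    rw [β.car_inv, hp]
    exact hf
  rw [gammaAct_eq_mapDomain hf']
  conv_rhs => rw [← Finsupp.mapDomain_id (v := f)]
  exact Finsupp.mapDomain_congr fun q hq =>
    Prod.ext rfl (β.act_id _ hp _ (hf q (Finsupp.mem_support_iff.1 hq)))

end Gamma

section GammaIdeal

variable {G : Type u} {K : Type*} {X : Type v} {k : Type*} {A : Type w}
  [Field k] [Ring A] [Algebra k A] {𝒢 : Gpd G} {𝒦 : Gpd K}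
  {α : GpdSetAction 𝒢 X} {β : GpdSetAction 𝒦 X} {𝒜 : GpdGrading 𝒢 k A}

lemma gammaAct_mapsTo_Eset (hc : GKCompat α β) (κ : K) :
    Set.MapsTo (gammaAct β κ) (Eset α β 𝒜 (𝒦.inv κ)) (Eset α β 𝒜 κ) := by
  intro f hf
  rw [gammaAct_eq_mapDomain hf.2, Finsupp.mapDomain, Eset_eq_homogeneousSupported,
    SetLike.mem_coe]
  exact Submodule.finsuppSum_mem _ _ _ _ fun p hp =>
    single_mem_homogeneousSupported (hf.1 p).1 fun _ =>
      hc.beta_inv (𝒢.s p.1) κ ⟨p.2, ⟨(hf.1 p).2 hp, hf.2 p hp⟩, rfl⟩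

lemma gammaAct_bijOn_Eset (hc : GKCompat α β) (κ : K) :
    Set.BijOn (gammaAct β κ) (Eset α β 𝒜 (𝒦.inv κ)) (Eset α β 𝒜 κ) := by
  have hinv : Set.InvOn (gammaAct β (𝒦.inv κ)) (gammaAct β κ)
      (Eset α β 𝒜 (𝒦.inv κ)) (Eset α β 𝒜 κ) := by
    constructor
    · intro f hf
      rw [gammaAct_gammaAct (𝒦.s_inv κ) hf.2, 𝒦.inv_mul]
      exact gammaAct_of_obj (𝒦.s_s κ) (by rw [← β.car_inv]; exact hf.2)
    · intro f hf
      rw [gammaAct_gammaAct (𝒦.t_inv κ).symm (by rw [β.car_inv_inv]; exact hf.2), 𝒦.mul_inv]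
      exact gammaAct_of_obj (𝒦.s_t κ) (by rw [← β.car_t]; exact hf.2)
  refine hinv.bijOn (gammaAct_mapsTo_Eset hc κ) ?_
  simpa only [Eset_eq_of_car_eq (β.car_inv_inv κ)] using gammaAct_mapsTo_Eset hc (𝒦.inv κ)

lemma gammaAct_smashMul_single (hc : GKCompat α β) {κ : K} {p q : G × X} (a b : A)
    (hp : p.2 ∈ β.car (𝒦.inv κ)) (hq : q.2 ∈ β.car (𝒦.inv κ)) (hqα : q.2 ∈ α.car (𝒢.s q.1)) :
    gammaAct β κ (smashMul α (Finsupp.single p a) (Finsupp.single q b))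
      = smashMul α (gammaAct β κ (Finsupp.single p a)) (gammaAct β κ (Finsupp.single q b)) := by
  rw [smashMul_single_single, gammaAct_single, gammaAct_single, if_pos hp, if_pos hq,
    smashMul_single_single]
  simp only [hc.act_act_eq_act_iff hp hq hqα]
  split_ifs
  · rw [gammaAct_single, if_pos hq]
  · exact Finsupp.sum_zero_index

lemma gammaAct_smashMul (hc : GKCompat α β) {κ : K} {f₁ f₂ : (G × X) →₀ A}
    (h₁ : f₁ ∈ Eset α β 𝒜 (𝒦.inv κ)) (h₂ : f₂ ∈ Eset α β 𝒜 (𝒦.inv κ)) :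
    gammaAct β κ (smashMul α f₁ f₂) = smashMul α (gammaAct β κ f₁) (gammaAct β κ f₂) := by
  conv_rhs => rw [← f₁.sum_single, ← f₂.sum_single, gammaAct_finsuppSum, gammaAct_finsuppSum,
    smashMul_finsuppSum_left]
  rw [smashMul_eq_sum_single, gammaAct_finsuppSum]
  refine Finsupp.sum_congr fun p hp => ?_
  rw [gammaAct_finsuppSum, smashMul_finsuppSum_right]
  refine Finsupp.sum_congr fun q hq => ?_
  rw [Finsupp.mem_support_iff] at hp hq
  exact gammaAct_smashMul_single hc _ _ (h₁.2 p hp) (h₂.2 q hq) ((h₂.1 q).2 hq)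

end GammaIdeal

lemma existsUnique_Eset_decomposition {G : Type u} {K : Type*} {X : Type v} {k : Type*}
    {A : Type w} [Field k] [Ring A] [Algebra k A] {𝒢 : Gpd G} {𝒦 : Gpd K}
    {α : GpdSetAction 𝒢 X} {β : GpdSetAction 𝒦 X} {𝒜 : GpdGrading 𝒢 k A}
    (hsplit : β.Split) {f : (G × X) →₀ A} (hf : f ∈ smashSet α 𝒜) :
    ∃! c : K → ((G × X) →₀ A), (Function.support c).Finite ∧
      (∀ p, 𝒦.obj p → c p ∈ Eset α β 𝒜 p) ∧ (∀ p, ¬ 𝒦.obj p → c p = 0) ∧ f = ∑ᶠ p, c p := by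
  choose ε hε hε_unique using hsplit
  have hmem : ∀ p, f.filter (fun q => ε q.2 = p) ∈ Eset α β 𝒜 p := by
    refine fun p => ⟨fun q => ⟨?_, fun hq => (hf q).2 (Finsupp.filter_apply_ne_zero hq).2⟩,
      fun q hq => (Finsupp.filter_apply_ne_zero hq).1 ▸ (hε q.2).2⟩
    rw [Finsupp.filter_apply]
    split_ifs
    exacts [(hf q).1, zero_mem _]
  have hzero : ∀ p, ¬ 𝒦.obj p → f.filter (fun q => ε q.2 = p) = 0 := fun p hp =>
    (Finsupp.filter_eq_zero_iff _ _).2 fun q hq => absurd (hq ▸ (hε q.2).1) hp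
  refine ⟨fun p => f.filter (fun q => ε q.2 = p),
    ⟨Finsupp.finite_support_filter_fiber f _, fun p _ => hmem p, hzero,
      (Finsupp.finsum_filter_fiber f _).symm⟩, ?_⟩
  rintro c ⟨hc, hcE, hc0, rfl⟩
  have hσ : ∀ p q, c p q ≠ 0 → p = ε q.2 := by
    intro p q hq
    by_cases hp : 𝒦.obj p
    · exact hε_unique q.2 p ⟨hp, (hcE p hp).2 q hq⟩
    · exact absurd (by rw [hc0 p hp]; rfl) hq
  exact funext (Finsupp.eq_filter_finsum hc hσ)

theorem induced_groupoid_action_on_smash_product_general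
    {G : Type u} {K : Type*} (𝒢 : Gpd G) (𝒦 : Gpd K) {X : Type v}
    (k : Type*) (A : Type w) [Field k] [Ring A] [Algebra k A] [Finite X]
    (hG₀ : 𝒢.Objs.Finite) (𝒜 : GpdGrading 𝒢 k A)
    (α : GpdSetAction 𝒢 X) (β : GpdSetAction 𝒦 X)
    (hsplitβ : β.Split) (hc : GKCompat α β)
    (one : G → A) (hone : IsIdFamily 𝒜 one) :
    -- `E_k = E_{r(k)}`
    (∀ κ, Eset α β 𝒜 κ = Eset α β 𝒜 (𝒦.t κ)) ∧
    -- each `E_k` is a two-sided ideal of `A #_α^𝒢 X`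
    (∀ κ, ∀ f ∈ Eset α β 𝒜 κ, ∀ h ∈ smashSet α 𝒜,
      smashMul α f h ∈ Eset α β 𝒜 κ ∧ smashMul α h f ∈ Eset α β 𝒜 κ) ∧
    -- each `E_k` is unital with identity `𝟏_k`
    (∀ κ, OneE α β one κ ∈ Eset α β 𝒜 κ ∧
      ∀ f ∈ Eset α β 𝒜 κ, smashMul α (OneE α β one κ) f = f ∧
        smashMul α f (OneE α β one κ) = f) ∧
    -- `γ_k : E_{k⁻¹} → E_k` is a bijection
    (∀ κ, Set.BijOn (gammaAct β κ) (Eset α β 𝒜 (𝒦.inv κ)) (Eset α β 𝒜 κ)) ∧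
    -- `γ_k` is an algebra homomorphism
    (∀ κ, ∀ f₁ ∈ Eset α β 𝒜 (𝒦.inv κ), ∀ f₂ ∈ Eset α β 𝒜 (𝒦.inv κ),
      gammaAct β κ (f₁ + f₂) = gammaAct β κ f₁ + gammaAct β κ f₂ ∧
      gammaAct β κ (smashMul α f₁ f₂) = smashMul α (gammaAct β κ f₁) (gammaAct β κ f₂)) ∧
    (∀ (c : k) (κ : K), ∀ f ∈ Eset α β 𝒜 (𝒦.inv κ),
      gammaAct β κ (c • f) = c • gammaAct β κ f) ∧
    -- `γ_p` is the identity for `p ∈ 𝒦₀`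
    (∀ p, 𝒦.obj p → ∀ f ∈ Eset α β 𝒜 p, gammaAct β p f = f) ∧
    -- `γ_k ∘ γ_l = γ_{kl}` for composable `k, l`
    (∀ κ l, 𝒦.s κ = 𝒦.t l → ∀ f ∈ Eset α β 𝒜 (𝒦.inv (𝒦.mul κ l)),
      gammaAct β κ (gammaAct β l f) = gammaAct β (𝒦.mul κ l) f) ∧
    -- `γ_k (a_g δ_y) = a_g δ_{β_k(y)}`
    (∀ κ g, ∀ a ∈ 𝒜.comp g, ∀ y ∈ β.car (𝒦.inv κ),
      gammaAct β κ (Finsupp.single ((g, y) : G × X) a)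
        = Finsupp.single ((g, β.act κ y) : G × X) a) ∧
    -- `A #_α^𝒢 X = ⊕_{p ∈ 𝒦₀} E_p`
    (∀ f ∈ smashSet α 𝒜, ∃! c : K → ((G × X) →₀ A),
      (Function.support c).Finite ∧
      (∀ p, 𝒦.obj p → c p ∈ Eset α β 𝒜 p) ∧
      (∀ p, ¬ 𝒦.obj p → c p = 0) ∧
      f = ∑ᶠ p, c p) := by
  refine ⟨fun κ => Eset_eq_of_car_eq (β.car_t κ),
    fun κ f hf h hh =>
      ⟨smashMul_mem_Eset_of_left_mem hc hf hh, smashMul_mem_Eset_of_right_mem hh hf⟩,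
    fun κ => ⟨OneE_mem_Eset hG₀ hone,
      fun f hf => ⟨smashMul_OneE_left hG₀ hone hc hf, smashMul_OneE_right hG₀ hone hf⟩⟩,
    gammaAct_bijOn_Eset hc,
    fun κ f₁ h₁ f₂ h₂ => ⟨gammaAct_add β κ f₁ f₂, gammaAct_smashMul hc h₁ h₂⟩,
    fun c κ f _ => gammaAct_smul β κ c f,
    fun p hp f hf => gammaAct_of_obj hp hf.2,
    fun κ l hκl f hf => gammaAct_gammaAct hκl ?_,
    fun κ g a _ y hy => by rw [gammaAct_single, if_pos hy],
    fun f hf => existsUnique_Eset_decomposition hsplitβ hf⟩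
  simpa only [β.car_inv, 𝒦.s_mul _ _ hκl] using hf.2

/-- For a finite split `(𝒢_α, 𝒦_β)`-set `X` and a unital
`𝒢`-graded algebra `A` (with `𝒢₀` finite), the data `γ = (E_k, γ_k)_{k ∈ 𝒦}`
is an action of the groupoid `𝒦` on the algebra `A #_α^𝒢 X`, each ideal `E_k`
is unital with identity `𝟏_k`, and `A #_α^𝒢 X = ⊕_{p ∈ 𝒦₀} E_p`. -/
theorem induced_groupoid_action_on_smash_product
    {G : Type u} {K : Type*} (𝒢 : Gpd G) (𝒦 : Gpd K) {X : Type v}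
    (k : Type*) (A : Type w) [Field k] [Ring A] [Algebra k A] [Finite X]
    (hG₀ : 𝒢.Objs.Finite) (𝒜 : GpdGrading 𝒢 k A)
    (α : GpdSetAction 𝒢 X) (β : GpdSetAction 𝒦 X)
    (hsplitα : α.Split) (hsplitβ : β.Split) (hc : GKCompat α β)
    (one : G → A) (hone : IsIdFamily 𝒜 one) :
    -- `E_k = E_{r(k)}`
    (∀ κ, Eset α β 𝒜 κ = Eset α β 𝒜 (𝒦.t κ)) ∧
    -- each `E_k` is a two-sided ideal of `A #_α^𝒢 X`
    (∀ κ, ∀ f ∈ Eset α β 𝒜 κ, ∀ h ∈ smashSet α 𝒜,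
      smashMul α f h ∈ Eset α β 𝒜 κ ∧ smashMul α h f ∈ Eset α β 𝒜 κ) ∧
    -- each `E_k` is unital with identity `𝟏_k`
    (∀ κ, OneE α β one κ ∈ Eset α β 𝒜 κ ∧
      ∀ f ∈ Eset α β 𝒜 κ, smashMul α (OneE α β one κ) f = f ∧
        smashMul α f (OneE α β one κ) = f) ∧
    -- `γ_k : E_{k⁻¹} → E_k` is a bijection
    (∀ κ, Set.BijOn (gammaAct β κ) (Eset α β 𝒜 (𝒦.inv κ)) (Eset α β 𝒜 κ)) ∧
    -- `γ_k` is an algebra homomorphism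
    (∀ κ, ∀ f₁ ∈ Eset α β 𝒜 (𝒦.inv κ), ∀ f₂ ∈ Eset α β 𝒜 (𝒦.inv κ),
      gammaAct β κ (f₁ + f₂) = gammaAct β κ f₁ + gammaAct β κ f₂ ∧
      gammaAct β κ (smashMul α f₁ f₂) = smashMul α (gammaAct β κ f₁) (gammaAct β κ f₂)) ∧
    (∀ (c : k) (κ : K), ∀ f ∈ Eset α β 𝒜 (𝒦.inv κ),
      gammaAct β κ (c • f) = c • gammaAct β κ f) ∧
    -- `γ_p` is the identity for `p ∈ 𝒦₀`
    (∀ p, 𝒦.obj p → ∀ f ∈ Eset α β 𝒜 p, gammaAct β p f = f) ∧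
    -- `γ_k ∘ γ_l = γ_{kl}` for composable `k, l`
    (∀ κ l, 𝒦.s κ = 𝒦.t l → ∀ f ∈ Eset α β 𝒜 (𝒦.inv (𝒦.mul κ l)),
      gammaAct β κ (gammaAct β l f) = gammaAct β (𝒦.mul κ l) f) ∧
    -- `γ_k (a_g δ_y) = a_g δ_{β_k(y)}`
    (∀ κ g, ∀ a ∈ 𝒜.comp g, ∀ y ∈ β.car (𝒦.inv κ),
      gammaAct β κ (Finsupp.single ((g, y) : G × X) a)
        = Finsupp.single ((g, β.act κ y) : G × X) a) ∧
    -- `A #_α^𝒢 X = ⊕_{p ∈ 𝒦₀} E_p`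
    (∀ f ∈ smashSet α 𝒜, ∃! c : K → ((G × X) →₀ A),
      (Function.support c).Finite ∧
      (∀ p, 𝒦.obj p → c p ∈ Eset α β 𝒜 p) ∧
      (∀ p, ¬ 𝒦.obj p → c p = 0) ∧
      f = ∑ᶠ p, c p) :=
  induced_groupoid_action_on_smash_product_general 𝒢 𝒦 k A hG₀ 𝒜 α β hsplitβ hc one hone

end
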